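/- arXiv:2506.13728 — 2 statements merged into one kernel-verified Lean document; each statement's English description precedes it below -/
import Mathlib

section
/- Strong maximum principle: let β ∈ (0,1) and u : T_m → ℝ satisfy -Δ_β u ≥ 0 in T_m and liminf u ≥ 0 along every branch. If u(z) = 0 for some z ∈ T_m, then u ≡ 0 on T_m. -/
open Filter Finset Topology

/-- The weight `p_β`: `1` if `β = 0`, and `β/(1-β)` otherwise. -/
noncomputable def pB (β : ℝ) : ℝ := if β = 0 then 1 else β / (1 - β)

/-- Vertices of the regular `m`-branching tree are finite sequences over `Fin m`
(the root is `[]`, the successors of `x` are `i :: x`, the predecessor of `a :: t` is `t`,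
and the level `|x|` is the list length).  The `β`-Laplacian on the tree. -/
noncomputable def lapB (m : ℕ) (β : ℝ) (u : List (Fin m) → ℝ) : List (Fin m) → ℝ
  | [] => (∑ i : Fin m, u [i]) / m - u []
  | a :: t =>
      (β * u t + (1 - β) * (∑ i : Fin m, u (i :: a :: t)) / m - u (a :: t)) *
        pB β ^ (-((a :: t).length : ℤ))

/-- A branch: an infinite path starting at the root, following successors. -/
def IsBranch (m : ℕ) (b : ℕ → List (Fin m)) : Prop :=
  b 0 = [] ∧ ∀ n, ∃ i : Fin m, b (n + 1) = i :: b n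

/-- Homogeneous Dirichlet boundary condition: `u → 0` along every branch. -/
def ZeroOnBoundary (m : ℕ) (u : List (Fin m) → ℝ) : Prop :=
  ∀ b : ℕ → List (Fin m), IsBranch m b → Tendsto (fun n => u (b n)) atTop (𝓝 0)

/-- `lam` is a principal eigenvalue of `Δ_β`: it is positive and admits a bounded
nonnegative nontrivial eigenfunction vanishing on the boundary. -/
def IsPrincipalEigenvalue (m : ℕ) (β lam : ℝ) : Prop :=
  0 < lam ∧ ∃ u : List (Fin m) → ℝ,
    (∃ M, ∀ x, |u x| ≤ M) ∧ (∀ x, 0 ≤ u x) ∧ u ≠ 0 ∧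
    (∀ x, -lapB m β u x = lam * u x) ∧ ZeroOnBoundary m u

/-- Membership in the set `A_β`. -/
def memA (m : ℕ) (β lam : ℝ) : Prop :=
  0 < lam ∧ ∃ v : List (Fin m) → ℝ, ∃ c C : ℝ, 0 < c ∧
    (∀ x, c < v x ∧ v x < C) ∧ ∀ x, lapB m β v x + lam * v x ≤ 0

/-- `λ₁(β) = sup A_β`. -/
noncomputable def lam1 (m : ℕ) (β : ℝ) : ℝ := sSup {lam | memA m β lam}

/-!
Superharmonicity says that `u` at a vertex dominates a convex combination of its value at the
parent and the mean over its children. At a vertex not above its parent, the smallest child is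
therefore not above the vertex either. If `u x < 0`, the ancestor of `x` with the smallest value
is such a vertex, so the greedy descent from it stays below `u x < 0`, contradicting
`liminf u ≥ 0` along the branch it defines: `u ≥ 0`. Once `u ≥ 0`, the same inequality at a zero of `u`
forces the parent and all children to vanish, and the tree is connected.
-/

section Superharmonic

variable {m : ℕ} {β : ℝ} {u : List (Fin m) → ℝ}

lemma pB_pos (hβ0 : 0 < β) (hβ1 : β < 1) : 0 < pB β := by
  rw [pB, if_neg hβ0.ne']
  exact div_pos hβ0 (by linarith)

noncomputable def childMean (m : ℕ) (u : List (Fin m) → ℝ) (x : List (Fin m)) : ℝ :=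
  (∑ i : Fin m, u (i :: x)) / m

/-- The mean-value form of `-Δ_β u ≥ 0`, with the positive factor `p_β ^ (-|x|)` removed. -/
structure IsSuperharmonic (m : ℕ) (β : ℝ) (u : List (Fin m) → ℝ) : Prop where
  root : childMean m u [] ≤ u []
  cons : ∀ a t, β * u t + (1 - β) * childMean m u (a :: t) ≤ u (a :: t)

lemma IsSuperharmonic.of_neg_lapB_nonneg (hβ0 : 0 < β) (hβ1 : β < 1)
    (hu : ∀ x, 0 ≤ -lapB m β u x) : IsSuperharmonic m β u where
  root := by
    have := hu []
    rw [lapB] at this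
    rw [childMean]
    linarith
  cons a t := by
    have h := hu (a :: t)
    have hp : 0 < pB β ^ (-((a :: t).length : ℤ)) := zpow_pos (pB_pos hβ0 hβ1) _
    rw [lapB, mul_div_assoc] at h
    rw [childMean]
    nlinarith

lemma child_le_childMean {x : List (Fin m)} {i : Fin m} (hi : ∀ j, u (i :: x) ≤ u (j :: x)) :
    u (i :: x) ≤ childMean m u x := by
  have hm : (0 : ℝ) < m := by exact_mod_cast i.pos
  rw [childMean, le_div_iff₀ hm]
  calc u (i :: x) * m = ∑ _j : Fin m, u (i :: x) := by simp [mul_comm]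
    _ ≤ ∑ j : Fin m, u (j :: x) := sum_le_sum fun j _ => hi j

lemma eq_zero_of_childMean_nonpos (hnn : ∀ x, 0 ≤ u x) {x : List (Fin m)}
    (hx : childMean m u x ≤ 0) (i : Fin m) : u (i :: x) = 0 := by
  have hm : (0 : ℝ) < m := by exact_mod_cast i.pos
  rw [childMean, div_le_iff₀ hm, zero_mul] at hx
  have hsum := le_antisymm hx (sum_nonneg fun j _ => hnn (j :: x))
  exact (sum_eq_zero_iff_of_nonneg fun j _ => hnn (j :: x)).1 hsum i (mem_univ i)

def LeParent (u : List (Fin m) → ℝ) : List (Fin m) → Prop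
  | [] => True
  | a :: t => u (a :: t) ≤ u t

lemma exists_le_leParent (u : List (Fin m) → ℝ) (x : List (Fin m)) :
    ∃ y, u y ≤ u x ∧ LeParent u y := by
  induction x with
  | nil => exact ⟨[], le_rfl, trivial⟩
  | cons a t ih =>
    by_cases h : u (a :: t) ≤ u t
    · exact ⟨a :: t, le_rfl, h⟩
    · obtain ⟨y, hyt, hy⟩ := ih
      exact ⟨y, hyt.trans (not_le.1 h).le, hy⟩

lemma IsSuperharmonic.leParent_child (hu : IsSuperharmonic m β u) (hβ0 : 0 ≤ β) (hβ1 : β < 1)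
    {x : List (Fin m)} (hx : LeParent u x) {i : Fin m} (hi : ∀ j, u (i :: x) ≤ u (j :: x)) :
    LeParent u (i :: x) := by
  have hmean := child_le_childMean hi
  show u (i :: x) ≤ u x
  cases x with
  | nil => exact hmean.trans hu.root
  | cons a t =>
    have h := hu.cons a t
    have hx : u (a :: t) ≤ u t := hx
    nlinarith

def greedyPath (sel : List (Fin m) → Fin m) (y : List (Fin m)) : ℕ → List (Fin m)
  | 0 => y
  | n + 1 => sel (greedyPath sel y n) :: greedyPath sel y n

lemma drop_add_eq_of_succ {g : ℕ → List (Fin m)} (hg : ∀ n, ∃ i, g (n + 1) = i :: g n)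
    (k j : ℕ) : (g (k + j)).drop j = g k := by
  induction j with
  | zero => rfl
  | succ j ih =>
    obtain ⟨i, hi⟩ := hg (k + j)
    rw [← add_assoc, hi, List.drop_succ_cons, ih]

lemma length_eq_of_succ {g : ℕ → List (Fin m)} (hg : ∀ n, ∃ i, g (n + 1) = i :: g n) (n : ℕ) :
    (g n).length = (g 0).length + n := by
  induction n with
  | zero => rfl
  | succ n ih =>
    obtain ⟨i, hi⟩ := hg n
    rw [hi, List.length_cons, ih, add_assoc]

lemma isBranch_drop_of_succ {g : ℕ → List (Fin m)} (hg : ∀ n, ∃ i, g (n + 1) = i :: g n) :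
    IsBranch m fun n => (g n).drop (g 0).length := by
  refine ⟨List.drop_length, fun n => ?_⟩
  have hlt : (g 0).length < (g (n + 1)).length := by rw [length_eq_of_succ hg (n + 1)]; omega
  obtain ⟨i, hi⟩ := hg n
  refine ⟨(g (n + 1))[(g 0).length], ?_⟩
  dsimp only
  rw [List.drop_eq_getElem_cons hlt]
  congr 1
  rw [hi, List.drop_succ_cons]

theorem IsSuperharmonic.nonneg [NeZero m] (hu : IsSuperharmonic m β u) (hβ0 : 0 ≤ β)
    (hβ1 : β < 1) (hbdry : ∀ b : ℕ → List (Fin m), IsBranch m b →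
      ∀ ε > (0 : ℝ), ∀ᶠ n in atTop, -ε ≤ u (b n)) (x : List (Fin m)) : 0 ≤ u x := by
  by_contra! hx
  obtain ⟨y, hyx, hy⟩ := exists_le_leParent u x
  choose sel hsel using fun x : List (Fin m) => Finite.exists_min fun i => u (i :: x)
  set g := greedyPath sel y
  have hg : ∀ n, ∃ i, g (n + 1) = i :: g n := fun n => ⟨_, rfl⟩
  have hg_leParent : ∀ n, LeParent u (g n) := by
    intro n
    induction n with
    | zero => exact hy
    | succ n ih => exact hu.leParent_child hβ0 hβ1 ih (hsel (g n))
  have hg_le : ∀ n, u (g n) ≤ u y := by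
    intro n
    induction n with
    | zero => exact le_rfl
    | succ n ih => exact (hg_leParent (n + 1)).trans ih
  obtain ⟨N, hN⟩ := eventually_atTop.1 <|
    hbdry _ (isBranch_drop_of_succ hg) (-u y / 2) (by linarith)
  have h := hN (N + y.length) (Nat.le_add_right _ _)
  rw [show (g 0).length = y.length from rfl, drop_add_eq_of_succ hg] at h
  linarith [hg_le N]

lemma IsSuperharmonic.childMean_nonpos (hu : IsSuperharmonic m β u) (hβ0 : 0 ≤ β) (hβ1 : β < 1)
    (hnn : ∀ x, 0 ≤ u x) {x : List (Fin m)} (hx : u x = 0) : childMean m u x ≤ 0 := by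
  cases x with
  | nil => exact hx ▸ hu.root
  | cons a t =>
    have h := hu.cons a t
    have ht := mul_nonneg hβ0 (hnn t)
    rw [hx] at h
    nlinarith

lemma IsSuperharmonic.parent_eq_zero (hu : IsSuperharmonic m β u) (hβ0 : 0 < β) (hβ1 : β < 1)
    (hnn : ∀ x, 0 ≤ u x) {a : Fin m} {t : List (Fin m)} (hx : u (a :: t) = 0) : u t = 0 := by
  have h := hu.cons a t
  have hmean : 0 ≤ (1 - β) * childMean m u (a :: t) :=
    mul_nonneg (by linarith) (div_nonneg (sum_nonneg fun j _ => hnn _) (Nat.cast_nonneg m))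
  rw [hx] at h
  exact le_antisymm (nonpos_of_mul_nonpos_right (by linarith) hβ0) (hnn t)

end Superharmonic

theorem stmt3 (m : ℕ) (hm : 2 ≤ m) (β : ℝ) (hβ0 : 0 < β) (hβ1 : β < 1)
    (u : List (Fin m) → ℝ)
    (hsuper : ∀ x, 0 ≤ -lapB m β u x)
    (hbdry : ∀ b : ℕ → List (Fin m), IsBranch m b →
      ∀ ε > (0 : ℝ), ∀ᶠ n in atTop, -ε ≤ u (b n))
    (z : List (Fin m)) (hz : u z = 0) :
    ∀ x, u x = 0 := by
  have : NeZero m := ⟨by omega⟩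
  have hu := IsSuperharmonic.of_neg_lapB_nonneg hβ0 hβ1 hsuper
  have hnn := hu.nonneg hβ0.le hβ1 hbdry
  have hroot : u [] = 0 := by
    induction z with
    | nil => exact hz
    | cons a t ih => exact ih (hu.parent_eq_zero hβ0 hβ1 hnn hz)
  intro x
  induction x with
  | nil => exact hroot
  | cons a t ih => exact eq_zero_of_childMean_nonpos hnn (hu.childMean_nonpos hβ0.le hβ1 hnn ih) a
end

section
/- λ₁(β) is a lower bound for eigenvalues: let β ∈ (0,1/2), let λ be an eigenvalue of Δ_β (i.e., there is a bounded u ≢ 0 with -Δ_β u = λ u on T_m and u → 0 along branches), and let θ ∈ A_β. Then λ ≥ θ. -/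
/-!
Replacing `u` by `-u`, we may assume `u x₀ > 0` somewhere. Let `v` be a positive supersolution
witnessing `θ ∈ A_β`, bounded below by `c > 0`, and set `τ = (u x₀ / v x₀) c`. The part of
`{u ≥ τ}` connected to `x₀` is finite, by Kőnig's lemma, since `u → 0` along every branch.
Hence `u / v` attains its maximum `σ` over this part, at some `x`; at the neighbours of `x`
outside it, `u < τ ≤ σ v`.
Thus `u - σ v ≤ 0` at all neighbours of `x` and `= 0` at `x`, which gives
`Δ_β u(x) ≤ σ Δ_β v(x)`, i.e. `-λ u(x) ≤ -θ σ v(x) = -θ u(x)`.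
-/

open Filter Finset Topology

theorem List.exists_cons_suffix_of_suffix_of_ne {α : Type*} {x y : List α} (h : x <:+ y)
    (hne : y ≠ x) : ∃ i, i :: x <:+ y := by
  induction y with
  | nil => exact absurd (List.suffix_nil.1 h).symm hne
  | cons b t ih =>
    rcases List.suffix_cons_iff.1 h with rfl | hxt
    · exact absurd rfl hne
    · by_cases hte : t = x
      · subst hte
        exact ⟨b, List.suffix_rfl⟩
      · obtain ⟨i, hi⟩ := ih hxt hte
        exact ⟨i, hi.trans (List.suffix_cons b t)⟩

section Tree

variable {m : ℕ}

theorem IsBranch.length_eq {b : ℕ → List (Fin m)} (hb : IsBranch m b) (n : ℕ) :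
    (b n).length = n := by
  induction n with
  | zero => simp [hb.1]
  | succ n ih =>
    obtain ⟨i, hi⟩ := hb.2 n
    simp [hi, ih]

/-- Kőnig's lemma for `T_m`. -/
theorem exists_isBranch_forall_infinite {S : Set (List (Fin m))} (hS : S.Infinite) :
    ∃ b, IsBranch m b ∧ ∀ n, {y ∈ S | b n <:+ y}.Infinite := by
  have exists_child_infinite : ∀ x, {y ∈ S | x <:+ y}.Infinite →
      ∃ i : Fin m, {y ∈ S | i :: x <:+ y}.Infinite := by
    intro x hx
    by_contra! hfin
    refine hx (((Set.finite_iUnion fun i => hfin i).insert x).subset ?_)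
    rintro y ⟨hyS, hxy⟩
    by_cases hyx : y = x
    · exact Or.inl hyx
    · obtain ⟨i, hi⟩ := List.exists_cons_suffix_of_suffix_of_ne hxy hyx
      exact Or.inr (Set.mem_iUnion.2 ⟨i, hyS, hi⟩)
  choose i hi using exists_child_infinite
  let g : {x // {y ∈ S | x <:+ y}.Infinite} → {x // {y ∈ S | x <:+ y}.Infinite} :=
    fun x => ⟨i x.1 x.2 :: x.1, hi x.1 x.2⟩
  have hroot : {y ∈ S | [] <:+ y}.Infinite := by simpa using hS
  refine ⟨fun n => (g^[n] ⟨[], hroot⟩).1, ⟨rfl, fun n => ⟨i _ (g^[n] ⟨[], hroot⟩).2, ?_⟩⟩, fun n => (g^[n] _).2⟩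
  simp only [Function.iterate_succ_apply', g]

/-- The connected component of `a` in `{τ ≤ u}` within the subtree below `a`. -/
def superlevelComponent (u : List (Fin m) → ℝ) (τ : ℝ) (a : List (Fin m)) :
    Set (List (Fin m)) :=
  {y | a <:+ y ∧ ∀ z, a <:+ z → z <:+ y → τ ≤ u z}

variable {u : List (Fin m) → ℝ} {τ : ℝ} {a y : List (Fin m)}

theorem cons_mem_superlevelComponent_or_lt (hy : y ∈ superlevelComponent u τ a) (i : Fin m) :
    i :: y ∈ superlevelComponent u τ a ∨ u (i :: y) < τ := by
  refine (lt_or_ge (u (i :: y)) τ).symm.imp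
    (fun hτ => ⟨hy.1.trans (List.suffix_cons i y), fun z haz hz => ?_⟩) id
  rcases List.suffix_cons_iff.1 hz with rfl | hzy
  · exact hτ
  · exact hy.2 z haz hzy

theorem tail_mem_superlevelComponent_or_lt (hy : y ∈ superlevelComponent u τ a)
    (ha : a = [] ∨ u a.tail < τ) :
    y.tail ∈ superlevelComponent u τ a ∨ u y.tail < τ := by
  by_cases hya : y = a
  · subst hya
    rcases ha with rfl | h
    · exact Or.inl hy
    · exact Or.inr h
  · cases y with
    | nil => exact absurd (List.suffix_nil.1 hy.1).symm hya
    | cons b t =>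
      have hat : a <:+ t := (List.suffix_cons_iff.1 hy.1).resolve_left (Ne.symm hya)
      exact Or.inl ⟨hat, fun z haz hzt => hy.2 z haz (hzt.trans (List.suffix_cons b t))⟩

theorem exists_mem_superlevelComponent {x : List (Fin m)} (hx : τ ≤ u x) :
    ∃ a, (a = [] ∨ u a.tail < τ) ∧ x ∈ superlevelComponent u τ a := by
  induction x with
  | nil => exact ⟨[], Or.inl rfl, List.nil_suffix, fun z _ hz => List.suffix_nil.1 hz ▸ hx⟩
  | cons b t ih =>
    by_cases ht : u t < τ
    · refine ⟨b :: t, Or.inr ht, List.suffix_rfl, fun z hz hz' => ?_⟩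
      rwa [hz'.eq_of_length (le_antisymm hz'.length_le hz.length_le)]
    · obtain ⟨a, ha, hat, hpath⟩ := ih (not_lt.1 ht)
      refine ⟨a, ha, hat.trans (List.suffix_cons b t), fun z haz hz => ?_⟩
      rcases List.suffix_cons_iff.1 hz with rfl | hzt
      · exact hx
      · exact hpath z haz hzt

theorem superlevelComponent_finite (hu : ZeroOnBoundary m u) (hτ : 0 < τ) (a : List (Fin m)) :
    (superlevelComponent u τ a).Finite := by
  by_contra hinf
  obtain ⟨b, hb, hbinf⟩ := exists_isBranch_forall_infinite hinf
  have hge : ∀ n, a.length ≤ n → τ ≤ u (b n) := by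
    intro n hn
    obtain ⟨y, hyS, hby⟩ := (hbinf n).nonempty
    exact hyS.2 _ (List.suffix_of_suffix_length_le hyS.1 hby (by rwa [hb.length_eq])) hby
  obtain ⟨n, hn, hlt⟩ := ((eventually_ge_atTop a.length).and
    ((hu b hb).eventually (eventually_lt_nhds hτ))).exists
  exact (hge n hn).not_gt hlt

theorem exists_touching_point (hu : ZeroOnBoundary m u) {v : List (Fin m) → ℝ} {c : ℝ}
    (hc : 0 < c) (hv : ∀ x, c ≤ v x) {x₀ : List (Fin m)} (hx₀ : 0 < u x₀) :
    ∃ x σ, 0 < σ ∧ u x = σ * v x ∧ u x.tail ≤ σ * v x.tail ∧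
      ∀ i : Fin m, u (i :: x) ≤ σ * v (i :: x) := by
  have hvpos : ∀ x, 0 < v x := fun x => hc.trans_le (hv x)
  have hσ₀ : 0 < u x₀ / v x₀ := div_pos hx₀ (hvpos x₀)
  set τ := u x₀ / v x₀ * c
  have hτx₀ : τ ≤ u x₀ := by
    calc τ ≤ u x₀ / v x₀ * v x₀ := mul_le_mul_of_nonneg_left (hv x₀) hσ₀.le
      _ = u x₀ := div_mul_cancel₀ _ (hvpos x₀).ne'
  obtain ⟨a, ha, hx₀a⟩ := exists_mem_superlevelComponent hτx₀
  obtain ⟨x, hx, hmax⟩ := Set.exists_max_image _ (fun y => u y / v y)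
    (superlevelComponent_finite hu (mul_pos hσ₀ hc) a) ⟨x₀, hx₀a⟩
  set σ := u x / v x
  have hσ : u x₀ / v x₀ ≤ σ := hmax x₀ hx₀a
  have hbound : ∀ y, y ∈ superlevelComponent u τ a ∨ u y < τ → u y ≤ σ * v y := by
    rintro y (hy | hy)
    · exact (div_le_iff₀ (hvpos y)).1 (hmax y hy)
    · calc u y ≤ τ := hy.le
        _ ≤ σ * v y := mul_le_mul hσ (hv y) hc.le (hσ₀.le.trans hσ)
  exact ⟨x, σ, hσ₀.trans_le hσ, (div_mul_cancel₀ _ (hvpos x).ne').symm,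
    hbound _ (tail_mem_superlevelComponent_or_lt hx ha),
    fun i => hbound _ (cons_mem_superlevelComponent_or_lt hx i)⟩

end Tree

section Laplacian

variable {m : ℕ} {β : ℝ}

theorem pB_nonneg (hβ0 : 0 ≤ β) (hβ1 : β ≤ 1) : 0 ≤ pB β := by
  unfold pB
  split_ifs
  · exact zero_le_one
  · exact div_nonneg hβ0 (sub_nonneg.2 hβ1)

theorem lapB_neg (u : List (Fin m) → ℝ) (x : List (Fin m)) :
    lapB m β (fun y => -u y) x = -lapB m β u x := by
  cases x <;> simp only [lapB, Finset.sum_neg_distrib] <;> ring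

theorem lapB_sub_mul (u v : List (Fin m) → ℝ) (σ : ℝ) (x : List (Fin m)) :
    lapB m β (fun y => u y - σ * v y) x = lapB m β u x - σ * lapB m β v x := by
  cases x <;> simp only [lapB, Finset.sum_sub_distrib, ← Finset.mul_sum] <;> ring

theorem lapB_nonpos_of_neighbors_nonpos (hβ0 : 0 ≤ β) (hβ1 : β ≤ 1) {w : List (Fin m) → ℝ}
    {x : List (Fin m)} (hx : w x = 0) (htail : w x.tail ≤ 0) (hchild : ∀ i, w (i :: x) ≤ 0) :
    lapB m β w x ≤ 0 := by
  have hsum : (∑ i : Fin m, w (i :: x)) / m ≤ 0 :=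
    div_nonpos_of_nonpos_of_nonneg (Finset.sum_nonpos fun i _ => hchild i) m.cast_nonneg
  cases x with
  | nil =>
    simp only [lapB, hx]
    linarith
  | cons b t =>
    simp only [List.tail_cons] at htail
    simp only [lapB, hx]
    refine mul_nonpos_of_nonpos_of_nonneg ?_ (zpow_nonneg (pB_nonneg hβ0 hβ1) _)
    rw [mul_div_assoc]
    nlinarith [mul_nonpos_of_nonneg_of_nonpos hβ0 htail]

theorem le_of_eigenvalue_of_pos (hβ0 : 0 ≤ β) (hβ1 : β ≤ 1) {lam : ℝ} {u : List (Fin m) → ℝ}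
    (heig : ∀ x, -lapB m β u x = lam * u x) (hu : ZeroOnBoundary m u) {x₀ : List (Fin m)}
    (hx₀ : 0 < u x₀) {θ : ℝ} (hθ : memA m β θ) : θ ≤ lam := by
  obtain ⟨-, v, c, _, hc, hv, hsuper⟩ := hθ
  obtain ⟨x, σ, hσ, hux, htail, hchild⟩ :=
    exists_touching_point hu hc (fun x => (hv x).1.le) hx₀
  have hcomp : lapB m β u x ≤ σ * lapB m β v x := by
    have h := lapB_nonpos_of_neighbors_nonpos hβ0 hβ1 (w := fun y => u y - σ * v y)
      (sub_eq_zero.2 hux) (sub_nonpos.2 htail) fun i => sub_nonpos.2 (hchild i)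
    rw [lapB_sub_mul] at h
    linarith
  have hupos : 0 < u x := hux ▸ mul_pos hσ (hc.trans (hv x).1)
  have hsuper' := mul_le_mul_of_nonneg_left (hsuper x) hσ.le
  rw [mul_add, mul_zero] at hsuper'
  refine le_of_mul_le_mul_right ?_ hupos
  calc θ * u x = σ * (θ * v x) := by rw [hux]; ring
    _ ≤ -lapB m β u x := by linarith
    _ = lam * u x := heig x

end Laplacian

theorem stmt11_general (m : ℕ) (β : ℝ) (hβ0 : 0 < β) (hβ1 : β < 1 / 2)
    (lam : ℝ) (u : List (Fin m) → ℝ)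
    (hne : u ≠ 0)
    (heig : ∀ x, -lapB m β u x = lam * u x)
    (hbdry : ZeroOnBoundary m u)
    (θ : ℝ) (hθ : memA m β θ) : θ ≤ lam := by
  obtain ⟨x₀, hx₀⟩ := Function.ne_iff.1 hne
  have hβ1' : β ≤ 1 := by linarith
  rcases hx₀.lt_or_gt with hneg | hpos
  · refine le_of_eigenvalue_of_pos hβ0.le hβ1' (u := fun x => -u x) (fun x => ?_)
      (fun b hb => by simpa using (hbdry b hb).neg) (neg_pos.2 hneg) hθ
    rw [lapB_neg, neg_neg]
    linear_combination -heig x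
  · exact le_of_eigenvalue_of_pos hβ0.le hβ1' heig hbdry hpos hθ

theorem stmt11 (m : ℕ) (hm : 2 ≤ m) (β : ℝ) (hβ0 : 0 < β) (hβ1 : β < 1 / 2)
    (lam : ℝ) (u : List (Fin m) → ℝ)
    (hbdd : ∃ M, ∀ x, |u x| ≤ M) (hne : u ≠ 0)
    (heig : ∀ x, -lapB m β u x = lam * u x)
    (hbdry : ZeroOnBoundary m u)
    (θ : ℝ) (hθ : memA m β θ) : θ ≤ lam :=
  stmt11_general m β hβ0 hβ1 lam u hne heig hbdry θ hθ
end
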